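/- arXiv:2206.14931 — 3 statements merged into one kernel-verified Lean document; each statement's English description precedes it below -/
import Mathlib

section
/- Let F be a field, let K := F((X)) be the field of formal Laurent series over F, let k ≥ 1, and let Λ be an F-subspace of K^k (K^k viewed as an F-vector space). Then the following are equivalent: (a) there exists n ≥ 1 such that the only v ∈ Λ with coeff_j(v_i) = 0 for every coordinate i and every integer j < n is v = 0 (i.e., Λ meets the polydisc (X^n F[[X]])^k only in 0); (b) the F-subspace Λ ∩ (X F[[X]])^k = {v ∈ Λ : coeff_j(v_i) = 0 for all i and all j ≤ 0} is finite-dimensional over F. (Huang–Papanikolas, Lemma \ref{L:discrete}, characterizing discrete F-subspaces; in the paper F = 𝔽_q(z) and X = θ^{−1}, so K = 𝕂_∞ = 𝔽_q(z)((θ^{−1})).) -/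
set_option synthInstance.maxHeartbeats 1000000
set_option maxHeartbeats 1000000


/-- The `F`-subspace of `(LaurentSeries F)^k` of vectors all of whose
coordinates lie in the maximal ideal `X F[[X]]`, i.e. have vanishing
coefficients in degrees `j ≤ 0`. -/
def coeffVanishingSubmodule (F : Type*) [Field F] (k : ℕ) :
    Submodule F (Fin k → LaurentSeries F) where
  carrier := {v | ∀ i : Fin k, ∀ j : ℤ, j ≤ 0 → (v i).coeff j = 0}
  add_mem' := by
    intro a b ha hb i j hj
    simp only [Pi.add_apply, HahnSeries.coeff_add, ha i j hj, hb i j hj, add_zero]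
  zero_mem' := by
    intro i j hj
    simp
  smul_mem' := by
    intro c v hv i j hj
    simp only [Pi.smul_apply, HahnSeries.coeff_smul, hv i j hj, smul_zero]

/-- The polydisc `(X^n F[[X]])^k` as a submodule. -/
def polydiscSubmodule (F : Type*) [Field F] (k n : ℕ) :
    Submodule F (Fin k → LaurentSeries F) where
  carrier := {v | ∀ i : Fin k, ∀ j : ℤ, j < (n : ℤ) → (v i).coeff j = 0}
  add_mem' := by
    intro a b ha hb i j hj
    simp only [Pi.add_apply, HahnSeries.coeff_add, ha i j hj, hb i j hj, add_zero]
  zero_mem' := by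
    intro i j hj
    simp
  smul_mem' := by
    intro c v hv i j hj
    simp only [Pi.smul_apply, HahnSeries.coeff_smul, hv i j hj, smul_zero]

/-- Huang–Papanikolas, Lemma `L:discrete` (characterization of discrete
`F`-subspaces of `K_∞^k` where `K = F((X))`):  an `F`-subspace
`Λ ⊆ K^k` meets some polydisc `(X^n F[[X]])^k` only in `0` (for some `n ≥ 1`)
if and only if `Λ ∩ (X F[[X]])^k` is finite dimensional over `F`. -/
theorem discrete_subspace_iff (F : Type*) [Field F] (k : ℕ) (hk : 1 ≤ k)
    (Λ : Submodule F (Fin k → LaurentSeries F)) :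
    (∃ n : ℕ, 1 ≤ n ∧ ∀ v ∈ Λ,
        (∀ i : Fin k, ∀ j : ℤ, j < (n : ℤ) → (v i).coeff j = 0) → v = 0)
      ↔ FiniteDimensional F ↥(Λ ⊓ coeffVanishingSubmodule F k) := by
  constructor
  · rintro ⟨n, hn1, hn⟩
    let φ : ↥(Λ ⊓ coeffVanishingSubmodule F k) →ₗ[F] (Fin k → Fin n → F) :=
      { toFun := fun x i j => ((x : Fin k → LaurentSeries F) i).coeff (j : ℤ)
        map_add' := by
          intro a b
          funext i j
          simp [HahnSeries.coeff_add]
        map_smul' := by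
          intro c a
          funext i j
          simp [HahnSeries.coeff_smul] }
    have hinj : Function.Injective φ := by
      rw [injective_iff_map_eq_zero]
      intro x hx
      have hmem := x.2
      rw [Submodule.mem_inf] at hmem
      have hzero : (x : Fin k → LaurentSeries F) = 0 := by
        refine hn _ hmem.1 ?_
        intro i j hj
        rcases le_or_gt j 0 with h0 | h0
        · exact hmem.2 i j h0
        · have hjn : j.toNat < n := by omega
          have := congrFun (congrFun hx i) ⟨j.toNat, hjn⟩
          simpa [φ, Int.toNat_of_nonneg h0.le] using this
      exact Subtype.ext hzero
    exact FiniteDimensional.of_injective φ hinj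
  · intro hfd
    let T : ℕ → Submodule F (Fin k → LaurentSeries F) :=
      fun n => Λ ⊓ coeffVanishingSubmodule F k ⊓ polydiscSubmodule F k n
    have hT_fd : ∀ n : ℕ, FiniteDimensional F ↥(T n) :=
      fun n => Submodule.finiteDimensional_of_le inf_le_left
    have hmemT : ∀ (n : ℕ) (v : Fin k → LaurentSeries F),
        v ∈ T n ↔ (v ∈ Λ ∧ v ∈ coeffVanishingSubmodule F k) ∧
          v ∈ polydiscSubmodule F k n := by
      intro n v
      rw [Submodule.mem_inf, Submodule.mem_inf]
    have hT_anti : ∀ {m n : ℕ}, m ≤ n → T n ≤ T m := by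
      intro m n hmn v hv
      rw [hmemT] at hv ⊢
      refine ⟨hv.1, ?_⟩
      intro i j hj
      exact hv.2 i j (lt_of_lt_of_le hj (by exact_mod_cast hmn))
    obtain ⟨r, ⟨n0, hn0⟩, hmin⟩ := Nat.lt_wfRel.wf.has_min
      (Set.range fun n => Module.finrank F (T n)) ⟨_, ⟨0, rfl⟩⟩
    have hrle : ∀ m : ℕ, r ≤ Module.finrank F (T m) := by
      intro m
      exact not_lt.mp (hmin _ ⟨m, rfl⟩)
    have hle : ∀ m : ℕ, T n0 ≤ T m := by
      intro m
      rcases le_total m n0 with h | h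
      · exact hT_anti h
      · have h1 : T m ≤ T n0 := hT_anti h
        have h2 : Module.finrank F (T n0) ≤ Module.finrank F (T m) := by
          have hn0' : Module.finrank F ↥(T n0) = r := hn0
          rw [hn0']; exact hrle m
        have := hT_fd n0
        exact (Submodule.eq_of_le_of_finrank_le h1 h2).ge
    have hbot : T n0 = ⊥ := by
      rw [eq_bot_iff]
      intro v hv
      rw [Submodule.mem_bot]
      funext i
      ext j
      have hm := ((hmemT _ _).mp (hle (j.toNat + 1) hv)).2 i j (by push_cast; omega)
      simpa using hm
    refine ⟨n0 + 1, by omega, ?_⟩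
    intro v hvΛ hv
    have hvC : v ∈ coeffVanishingSubmodule F k := by
      intro i j hj
      exact hv i j (by push_cast; omega)
    have hvP : v ∈ polydiscSubmodule F k n0 := by
      intro i j hj
      exact hv i j (by push_cast at hj ⊢; omega)
    have hx : v ∈ T n0 := (hmemT _ _).mpr ⟨⟨hvΛ, hvC⟩, hvP⟩
    rw [hbot, Submodule.mem_bot] at hx
    exact hx
end

section
/- Let H be a field, τ : H → H a field automorphism, and F := {c ∈ H : τ(c) = c} its fixed field. Let ℓ ≥ 1, let j ≤ m be natural numbers, and let N_j, N_{j+1}, …, N_m ∈ Mat_ℓ(H) be square matrices with det N_m ≠ 0. Then the solution set V := {x ∈ H^ℓ : Σ_{i=j}^{m} N_i · x^{(i)} = 0} is an F-subspace of H^ℓ, and its dimension over F is at most (m − j)·ℓ. (Huang–Papanikolas, Lemma \ref{L:kerneldim}; applying the statement with τ replaced by the automorphism τ^{−1} yields the same bound for the kernel of the adjoint operator x ↦ Σ_i (τ^{−i}(N_i))ᵀ x^{(−i)}.) -/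
open BigOperators

/-- The fixed subfield `F = {c ∈ H : τ(c) = c}` of a field automorphism `τ`. -/
def fixedSubfield {H : Type*} [Field H] (τ : H ≃+* H) : Subfield H where
  carrier := {c | τ c = c}
  mul_mem' := by
    intro a b ha hb
    simp only [Set.mem_setOf_eq] at *
    rw [map_mul, ha, hb]
  one_mem' := by simp only [Set.mem_setOf_eq, map_one]
  add_mem' := by
    intro a b ha hb
    simp only [Set.mem_setOf_eq] at *
    rw [map_add, ha, hb]
  zero_mem' := by simp only [Set.mem_setOf_eq, map_zero]
  neg_mem' := by
    intro a ha
    simp only [Set.mem_setOf_eq] at *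
    rw [map_neg, ha]
  inv_mem' := by
    intro a ha
    simp only [Set.mem_setOf_eq] at *
    rw [map_inv₀, ha]

private lemma fixedPow {H : Type*} [Field H] (τ : H ≃+* H) {c : H} (h : τ c = c) (n : ℕ) :
    (τ ^ n) c = c := by
  induction n with
  | zero => rfl
  | succ k ih => rw [pow_succ]; show (τ ^ k) (τ c) = c; rw [h, ih]

/-- Huang–Papanikolas, Lemma `L:kerneldim`.  Let `H` be a field with
automorphism `τ` and fixed field `F`, and let `N j, …, N m` be `ℓ × ℓ`
matrices over `H` with `det (N m) ≠ 0`.  Then the solution set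
`V = {x ∈ H^ℓ : Σ_{i=j}^m N_i x^{(i)} = 0}` of the twisted operator is an
`F`-subspace of `H^ℓ` (closed under addition and under multiplication by
fixed scalars), and its dimension over `F` is at most `(m − j)·ℓ`: every
`F`-linearly independent family inside `V` has at most `(m − j)·ℓ` members. -/
theorem twisted_kernel_dimension_bound {H : Type*} [Field H] (τ : H ≃+* H)
    (ℓ : ℕ) (hℓ : 1 ≤ ℓ) (j m : ℕ) (hjm : j ≤ m)
    (N : ℕ → Matrix (Fin ℓ) (Fin ℓ) H) (hNm : (N m).det ≠ 0) :
    (∀ x y : Fin ℓ → H,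
        (∑ i ∈ Finset.Icc j m, (N i).mulVec (fun a => (τ ^ i) (x a))) = 0 →
        (∑ i ∈ Finset.Icc j m, (N i).mulVec (fun a => (τ ^ i) (y a))) = 0 →
        (∑ i ∈ Finset.Icc j m, (N i).mulVec (fun a => (τ ^ i) ((x + y) a))) = 0)
    ∧ (∀ c : H, τ c = c → ∀ x : Fin ℓ → H,
        (∑ i ∈ Finset.Icc j m, (N i).mulVec (fun a => (τ ^ i) (x a))) = 0 →
        (∑ i ∈ Finset.Icc j m, (N i).mulVec (fun a => (τ ^ i) ((c • x) a))) = 0)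
    ∧ (∀ (s : ℕ) (v : Fin s → Fin ℓ → H),
        (∀ p, (∑ i ∈ Finset.Icc j m, (N i).mulVec (fun a => (τ ^ i) (v p a))) = 0) →
        LinearIndependent (fixedSubfield τ) v →
        s ≤ (m - j) * ℓ) := by
  have hIcc : Finset.Icc j m = Finset.Ico j (m + 1) := (Finset.Ico_add_one_right_eq_Icc j m).symm
  have hinv : (N m)⁻¹ * N m = 1 := Matrix.nonsing_inv_mul _ (isUnit_iff_ne_zero.mpr hNm)
  refine ⟨?_, ?_, ?_⟩
  · -- closure under addition
    intro x y hx hy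
    have : ∀ i : ℕ, (N i).mulVec (fun a => (τ ^ i) ((x + y) a))
        = (N i).mulVec (fun a => (τ ^ i) (x a)) + (N i).mulVec (fun a => (τ ^ i) (y a)) := by
      intro i
      have : (fun a => (τ ^ i) ((x + y) a))
          = (fun a => (τ ^ i) (x a)) + (fun a => (τ ^ i) (y a)) := by
        funext a; simp [map_add]
      rw [this, Matrix.mulVec_add]
    rw [Finset.sum_congr rfl fun i _ => this i, Finset.sum_add_distrib, hx, hy, add_zero]
  · -- closure under multiplication by fixed scalars
    intro c hc x hx
    have : ∀ i : ℕ, (N i).mulVec (fun a => (τ ^ i) ((c • x) a))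
        = c • (N i).mulVec (fun a => (τ ^ i) (x a)) := by
      intro i
      have h1 : (fun a => (τ ^ i) ((c • x) a)) = c • (fun a => (τ ^ i) (x a)) := by
        funext a
        simp only [Pi.smul_apply, smul_eq_mul, map_mul, fixedPow τ hc i]
      rw [h1, Matrix.mulVec_smul]
    rw [Finset.sum_congr rfl fun i _ => this i, ← Finset.smul_sum, hx, smul_zero]
  -- the dimension bound
  intro s v hv hli
  classical
  have hzero : ∀ k : ℕ, ∀ x : H, (τ ^ k) x = 0 → x = 0 := by
    intro k x hx
    have : (τ ^ k) x = (τ ^ k) 0 := by rw [hx, map_zero]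
    exact (τ ^ k).injective this
  -- Step A: an `H`-relation over `Ico j m` extends to exponent `m`.
  have stepA : ∀ c : Fin s → H,
      (∀ i ∈ Finset.Ico j m, ∀ a, ∑ p, c p * (τ ^ i) (v p a) = 0) →
      ∀ a, ∑ p, c p * (τ ^ m) (v p a) = 0 := by
    intro c hc
    set w : Fin ℓ → H := fun a => ∑ p, c p * (τ ^ m) (v p a) with hwdef
    suffices hw0 : w = 0 by
      intro a; exact congrFun hw0 a
    have hNw : (N m).mulVec w = 0 := by
      have hw' : w = ∑ p, c p • (fun a => (τ ^ m) (v p a)) := by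
        funext a; simp [hwdef, Finset.sum_apply]
      rw [hw', ← Matrix.mulVecLin_apply, map_sum]
      have hterm : ∀ p : Fin s, (N m).mulVecLin (c p • fun a => (τ ^ m) (v p a))
          = - ∑ i ∈ Finset.Ico j m, c p • (N i).mulVec (fun a => (τ ^ i) (v p a)) := by
        intro p
        have h1 := hv p
        rw [hIcc, Finset.sum_Ico_succ_top hjm] at h1
        have h2 : (N m).mulVec (fun a => (τ ^ m) (v p a))
            = - ∑ i ∈ Finset.Ico j m, (N i).mulVec (fun a => (τ ^ i) (v p a)) :=
          eq_neg_of_add_eq_zero_right h1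
        rw [map_smul, Matrix.mulVecLin_apply, h2, smul_neg, Finset.smul_sum]
      rw [Finset.sum_congr rfl (fun p _ => hterm p)]
      have hz : ∀ i ∈ Finset.Ico j m,
          ∑ p, c p • (N i).mulVec (fun a => (τ ^ i) (v p a)) = 0 := by
        intro i hi
        have hin : (∑ p, c p • fun a => (τ ^ i) (v p a)) = (0 : Fin ℓ → H) := by
          funext a; simpa [Finset.sum_apply] using hc i hi a
        calc ∑ p, c p • (N i).mulVec (fun a => (τ ^ i) (v p a))
            = (N i).mulVecLin (∑ p, c p • fun a => (τ ^ i) (v p a)) := by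
              rw [map_sum]
              exact Finset.sum_congr rfl fun p _ => by rw [map_smul, Matrix.mulVecLin_apply]
          _ = 0 := by rw [hin, map_zero]
      rw [Finset.sum_neg_distrib, Finset.sum_comm, Finset.sum_congr rfl hz]
      simp
    calc w = ((N m)⁻¹ * N m).mulVec w := by rw [hinv, Matrix.one_mulVec]
      _ = (N m)⁻¹.mulVec ((N m).mulVec w) := (Matrix.mulVec_mulVec w _ _).symm
      _ = 0 := by rw [hNw, Matrix.mulVec_zero]
  by_cases hjm' : j = m
  · -- degenerate case `j = m`: the solution space is zero
    subst hjm'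
    simp only [Nat.sub_self, Nat.zero_mul, Nat.le_zero]
    by_contra hs
    have hq : (0 : ℕ) < s := Nat.pos_of_ne_zero hs
    have hvz : v ⟨0, hq⟩ = 0 := by
      have h1 := hv ⟨0, hq⟩
      rw [Finset.Icc_self, Finset.sum_singleton] at h1
      have h2 : (fun a => (τ ^ j) (v ⟨0, hq⟩ a)) = (0 : Fin ℓ → H) := by
        calc (fun a => (τ ^ j) (v ⟨0, hq⟩ a))
            = ((N j)⁻¹ * N j).mulVec (fun a => (τ ^ j) (v ⟨0, hq⟩ a)) := by
              rw [hinv, Matrix.one_mulVec]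
          _ = (N j)⁻¹.mulVec ((N j).mulVec (fun a => (τ ^ j) (v ⟨0, hq⟩ a))) :=
              (Matrix.mulVec_mulVec _ _ _).symm
          _ = 0 := by rw [h1, Matrix.mulVec_zero]
      funext a
      have := congrFun h2 a
      exact hzero j _ this
    exact (hli.ne_zero ⟨0, hq⟩) hvz
  · have hjm2 : j < m := lt_of_le_of_ne hjm hjm'
    -- Key claim: any `H`-relation among the twisted vectors over `Ico j m` is trivial.
    have key : ∀ n : ℕ, ∀ c : Fin s → H,
        (Finset.univ.filter fun p => c p ≠ 0).card ≤ n →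
        (∀ i ∈ Finset.Ico j m, ∀ a, ∑ p, c p * (τ ^ i) (v p a) = 0) →
        ∀ p, c p = 0 := by
      intro n
      induction n with
      | zero =>
        intro c hcard _ p
        by_contra h
        have hmem : p ∈ Finset.univ.filter fun p => c p ≠ 0 := by simp [h]
        have := Finset.card_pos.mpr ⟨p, hmem⟩
        omega
      | succ n ih =>
        intro c hcard hR
        by_contra hne
        push_neg at hne
        obtain ⟨q, hq⟩ := hne
        set c' : Fin s → H := fun p => (c q)⁻¹ * c p with hc'def
        have hc'q : c' q = 1 := inv_mul_cancel₀ hq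
        have hRc' : ∀ i ∈ Finset.Ico j m, ∀ a, ∑ p, c' p * (τ ^ i) (v p a) = 0 := by
          intro i hi a
          have h0 := hR i hi a
          simp only [hc'def, mul_assoc]
          rw [← Finset.mul_sum, h0, mul_zero]
        have hAc' : ∀ a, ∑ p, c' p * (τ ^ m) (v p a) = 0 := stepA c' hRc'
        set e : Fin s → H := fun p => τ.symm (c' p) - c' p with hedef
        have hRe : ∀ i ∈ Finset.Ico j m, ∀ a, ∑ p, e p * (τ ^ i) (v p a) = 0 := by
          intro i hi a
          have hsub : ∀ p : Fin s, e p * (τ ^ i) (v p a)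
              = τ.symm (c' p * (τ ^ (i + 1)) (v p a)) - c' p * (τ ^ i) (v p a) := by
            intro p
            have hp1 : (τ ^ (i + 1)) (v p a) = τ ((τ ^ i) (v p a)) := by
              rw [pow_succ']; rfl
            simp only [hedef, map_mul, hp1, RingEquiv.symm_apply_apply, sub_mul]
          rw [Finset.sum_congr rfl fun p _ => hsub p, Finset.sum_sub_distrib, ← map_sum]
          have h1 : ∑ p, c' p * (τ ^ (i + 1)) (v p a) = 0 := by
            rcases Finset.mem_Ico.mp hi with ⟨hji, him⟩
            rcases eq_or_lt_of_le (Nat.succ_le_of_lt him) with heq | hlt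
            · have heq' : i + 1 = m := heq
              rw [heq']; exact hAc' a
            · exact hRc' (i + 1) (Finset.mem_Ico.mpr ⟨le_trans hji (Nat.le_succ i), hlt⟩) a
          rw [h1, map_zero, hRc' i hi a, sub_zero]
        have hesupp : (Finset.univ.filter fun p => e p ≠ 0) ⊆
            (Finset.univ.filter fun p => c p ≠ 0) \ {q} := by
          intro p hp
          simp only [Finset.mem_filter, Finset.mem_univ, true_and] at hp
          simp only [Finset.mem_sdiff, Finset.mem_filter, Finset.mem_univ, true_and,
            Finset.mem_singleton]
          constructor
          · intro h0
            apply hp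
            have hcp : c' p = 0 := by rw [hc'def]; simp [h0]
            rw [hedef]; simp [hcp]
          · intro h0
            apply hp
            subst h0
            rw [hedef]; simp [hc'q]
        have hecard : (Finset.univ.filter fun p => e p ≠ 0).card ≤ n := by
          have h1 := Finset.card_le_card hesupp
          have hqmem : q ∈ Finset.univ.filter fun p => c p ≠ 0 := by simp [hq]
          have h2 : ((Finset.univ.filter fun p => c p ≠ 0) \ {q}).card
              = (Finset.univ.filter fun p => c p ≠ 0).card - 1 := by
            rw [Finset.card_sdiff_of_subset (Finset.singleton_subset_iff.mpr hqmem),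
              Finset.card_singleton]
          have h3 := Finset.card_pos.mpr ⟨q, hqmem⟩
          omega
        have he0 : ∀ p, e p = 0 := ih e hecard hRe
        have hfix : ∀ p, τ (c' p) = c' p := by
          intro p
          have h0 := he0 p
          rw [hedef] at h0
          have h1 : τ.symm (c' p) = c' p := by
            have := sub_eq_zero.mp h0
            exact this
          calc τ (c' p) = τ (τ.symm (c' p)) := by rw [h1]
            _ = c' p := τ.apply_symm_apply _
        set g : Fin s → (fixedSubfield τ) := fun p => ⟨c' p, hfix p⟩ with hgdef
        have hsum : ∑ p, g p • v p = 0 := by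
          funext a
          have hj' : ∀ p : Fin s, (τ ^ j) (c' p) = c' p := fun p => fixedPow τ (hfix p) j
          have h0 : ∑ p, c' p * (τ ^ j) (v p a) = 0 :=
            hRc' j (Finset.mem_Ico.mpr ⟨le_refl j, hjm2⟩) a
          have h1 : (τ ^ j) (∑ p, c' p * v p a) = ∑ p, c' p * (τ ^ j) (v p a) := by
            rw [map_sum]
            exact Finset.sum_congr rfl fun p _ => by rw [map_mul, hj' p]
          have h2 : ∑ p, c' p * v p a = 0 := hzero j _ (h1.trans h0)
          simpa [Finset.sum_apply, Subfield.smul_def] using h2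
        have hgq := Fintype.linearIndependent_iff.mp hli g hsum q
        have : c' q = 0 := congrArg Subtype.val hgq
        rw [hc'q] at this
        exact one_ne_zero this
    -- `H`-linear independence of the flattened vectors
    set Φ : Fin s → (Fin (m - j) × Fin ℓ → H) :=
      fun p q => (τ ^ (j + q.1.val)) (v p q.2) with hΦdef
    have hliH : LinearIndependent H Φ := by
      rw [Fintype.linearIndependent_iff]
      intro g hg
      apply key (Finset.univ.filter fun p => g p ≠ 0).card g le_rfl
      intro i hi a
      rcases Finset.mem_Ico.mp hi with ⟨hji, him⟩
      have hk : i - j < m - j := by omega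
      have h0 := congrFun hg (⟨i - j, hk⟩, a)
      have hji' : j + (i - j) = i := by omega
      simpa [hΦdef, Finset.sum_apply, hji'] using h0
    have hcard := hliH.fintype_card_le_finrank
    rw [Module.finrank_fintype_fun_eq_card] at hcard
    simpa using hcard
end

section
/- Let R be a commutative ring, τ : R → R a ring automorphism, d ≥ 1, and let Γ ∈ Mat_r(R) be a square matrix fixed entrywise by τ^d (that is, τ^d(Γ) = Γ, where τ^i(Γ) denotes entrywise application of τ^i). Set G := τ^{d−1}(Γ) · τ^{d−2}(Γ) ⋯ τ(Γ) · Γ. Then the characteristic polynomial of G is fixed by τ acting on coefficients: applying τ to each coefficient of charpoly(G) = det(X·I_r − G) ∈ R[X] returns charpoly(G). In particular, every coefficient of charpoly(G) lies in the fixed subring R^τ := {c ∈ R : τ(c) = c}, and det(I_r − G) ∈ R^τ. (Final step of the proof of Corollary \ref{C:charpolys} of Huang–Papanikolas, showing the characteristic polynomial of Frobenius lies in 𝒜[X].) -/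
/-!
Write `P_d = τ^{d-1}(Γ) ⋯ τ(Γ) · Γ`. Peeling off the last factor gives `P_{m+1} = τ(P_m) · Γ`,
while peeling off the first one and using `τ^{m+1}(Γ) = Γ` gives `τ(P_{m+1}) = Γ · τ(P_m)`.
So `P_{m+1}` and `τ(P_{m+1})` are the two products of the same pair of matrices and have the same
characteristic polynomial, which is `τ` applied to that of `P_{m+1}`.
-/

open Polynomial

namespace Matrix

variable {n R : Type*} [CommRing R] (τ : R ≃+* R) (Γ : Matrix n n R)

theorem map_map_pow_succ (d : ℕ) : (Γ.map ⇑(τ ^ d)).map τ = Γ.map ⇑(τ ^ (d + 1)) := by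
  rw [pow_succ']
  rfl

variable [Fintype n] [DecidableEq n]

def twistedProd (d : ℕ) : Matrix n n R :=
  (((List.range d).reverse).map fun i => Γ.map ⇑(τ ^ i)).prod

@[simp]
theorem twistedProd_zero : twistedProd τ Γ 0 = 1 := rfl

theorem twistedProd_succ (d : ℕ) :
    twistedProd τ Γ (d + 1) = Γ.map ⇑(τ ^ d) * twistedProd τ Γ d := by
  simp [twistedProd, List.range_succ]

theorem twistedProd_succ' (d : ℕ) :
    twistedProd τ Γ (d + 1) = (twistedProd τ Γ d).map τ * Γ := by
  induction d with
  | zero => simp [twistedProd_succ]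
  | succ d ih =>
    conv_rhs => rw [twistedProd_succ]
    rw [twistedProd_succ, ih, ← mul_assoc, Matrix.map_mul, map_map_pow_succ]

variable {τ Γ}

theorem charpoly_map_twistedProd {d : ℕ} (hΓ : Γ.map ⇑(τ ^ d) = Γ) :
    ((twistedProd τ Γ d).map τ).charpoly = (twistedProd τ Γ d).charpoly := by
  cases d with
  | zero => simp
  | succ d =>
    rw [twistedProd_succ, Matrix.map_mul, map_map_pow_succ, hΓ, ← twistedProd_succ,
      twistedProd_succ', charpoly_mul_comm]

theorem charpoly_fixed_of_charpoly_map_eq {M : Matrix n n R}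
    (h : (M.map τ).charpoly = M.charpoly) :
    M.charpoly.map (τ : R →+* R) = M.charpoly
    ∧ (∀ i : ℕ, τ (M.charpoly.coeff i) = M.charpoly.coeff i)
    ∧ τ ((1 - M).det) = (1 - M).det := by
  have hfix : M.charpoly.map (τ : R →+* R) = M.charpoly := by
    rw [← charpoly_map]
    exact h
  have hdet : (1 - M).det = M.charpoly.eval 1 := by
    rw [eval_charpoly, scalar_apply, diagonal_one]
  exact ⟨hfix, fun i => by simpa using congrArg (coeff · i) hfix,
    by simpa [hdet] using congrArg (eval 1) hfix⟩

end Matrix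

theorem charpoly_of_twisted_product_fixed_general {R : Type*} [CommRing R] (τ : R ≃+* R)
    (d : ℕ) (r : ℕ) (Γ : Matrix (Fin r) (Fin r) R)
    (hΓ : Γ.map ⇑(τ ^ d) = Γ) :
    letI G : Matrix (Fin r) (Fin r) R :=
      (((List.range d).reverse).map fun i => Γ.map ⇑(τ ^ i)).prod
    Polynomial.map (τ : R →+* R) G.charpoly = G.charpoly
    ∧ (∀ i : ℕ, τ (G.charpoly.coeff i) = G.charpoly.coeff i)
    ∧ τ ((1 - G).det) = (1 - G).det := by
  exact Matrix.charpoly_fixed_of_charpoly_map_eq (Matrix.charpoly_map_twistedProd hΓ)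

/-- Final step of the proof of Huang–Papanikolas, Corollary `C:charpolys`.
Let `R` be a commutative ring, `τ` a ring automorphism of `R`, `d ≥ 1`, and
`Γ ∈ Mat_r(R)` fixed entrywise by `τ^d`.  Setting
`G = τ^{d−1}(Γ) ⋯ τ(Γ) · Γ`, the characteristic polynomial of `G` is fixed by
`τ` acting on coefficients; in particular every coefficient of
`charpoly(G)` lies in the fixed subring `R^τ`, and `det(1 − G) ∈ R^τ`. -/
theorem charpoly_of_twisted_product_fixed {R : Type*} [CommRing R] (τ : R ≃+* R)
    (d : ℕ) (hd : 1 ≤ d) (r : ℕ) (Γ : Matrix (Fin r) (Fin r) R)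
    (hΓ : Γ.map ⇑(τ ^ d) = Γ) :
    letI G : Matrix (Fin r) (Fin r) R :=
      (((List.range d).reverse).map fun i => Γ.map ⇑(τ ^ i)).prod
    Polynomial.map (τ : R →+* R) G.charpoly = G.charpoly
    ∧ (∀ i : ℕ, τ (G.charpoly.coeff i) = G.charpoly.coeff i)
    ∧ τ ((1 - G).det) = (1 - G).det :=
  charpoly_of_twisted_product_fixed_general τ d r Γ hΓ
end
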